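/- For every natural number n ≥ 1 the q-binomial (q-Chu–Vandermonde) identity (Z·Y; X)_n = ∑_{j=0}^{n} binom(n,j)_X · Z^{j} · (Z; X)_{n−j} · (Y; X)_{j} holds as an identity of polynomials in ℤ[X,Y,Z]. -/

import Mathlib

/-!
STATEMENT 3: the q-binomial (q-Chu–Vandermonde) theorem
`(ZY;X)_n = ∑_{j=0}^n binom(n,j)_X · Z^j · (Z;X)_{n-j} · (Y;X)_j`
with integer coefficients.  Since the Gaussian binomial `binom(n,j)_X` is defined as a
quotient of q-factorials, we state the identity in the fraction field of `ℤ[X,Y,Z]`;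
equality there of these (polynomial) expressions is equivalent to the identity in `ℤ[X,Y,Z]`.
-/

noncomputable section

open scoped Classical

/-- The Pochhammer symbol `(A; X)_k = ∏_{i=0}^{k-1} (1 - A·X^i)`. -/
def qPoch {F : Type*} [CommRing F] (A X : F) (k : ℕ) : F :=
  ∏ i ∈ Finset.range k, (1 - A * X ^ i)

/-- `(N)_X! = ∏_{k=1}^{N} (1 - X^k)`, with `(0)_X! = 1`. -/
def qFact {F : Type*} [CommRing F] (X : F) (N : ℕ) : F :=
  ∏ k ∈ Finset.range N, (1 - X ^ (k + 1))

/-- The Gaussian binomial `binom(a,b)_X = (a)_X! / ((a-b)_X! · (b)_X!)`. -/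
def qBinom {F : Type*} [Field F] (X : F) (a b : ℕ) : F :=
  qFact X a / (qFact X (a - b) * qFact X b)

/-- The fraction field of ℤ[X,Y,Z]. -/
abbrev F3 : Type := FractionRing (MvPolynomial (Fin 3) ℤ)

def XX : F3 := algebraMap (MvPolynomial (Fin 3) ℤ) F3 (MvPolynomial.X 0)
def YY : F3 := algebraMap (MvPolynomial (Fin 3) ℤ) F3 (MvPolynomial.X 1)
def ZZ : F3 := algebraMap (MvPolynomial (Fin 3) ℤ) F3 (MvPolynomial.X 2)

/-! Over any commutative ring, with the Gaussian binomial replaced by its q-Pascal recursion, the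
identity follows by induction on `n`: splitting the new factor of the `j`-th term as
`1 - ZY·Xⁿ = (1 - Z·X^(n-j)) + Z·X^(n-j)·(1 - Y·X^j)` produces exactly the two summands that the
q-Pascal rule reassembles. As `X` is not a root of unity in `Frac ℤ[X,Y,Z]`, the q-factorials are
nonzero there, so the recursion agrees with the quotient of q-factorials. -/

theorem Finset.sum_range_succ_eq_sum_add_of_shift {M : Type*} [AddCommMonoid M] {f g h : ℕ → M}
    {n : ℕ} (h0 : f 0 = g 0) (hsucc : ∀ j, f (j + 1) = g (j + 1) + h j) (hlast : g (n + 1) = 0) :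
    ∑ j ∈ range (n + 2), f j = ∑ j ∈ range (n + 1), (g j + h j) := by
  calc ∑ j ∈ range (n + 2), f j
      = (∑ j ∈ range (n + 1), g (j + 1) + g 0) + ∑ j ∈ range (n + 1), h j := by
        rw [sum_range_succ', h0]
        simp only [hsucc, sum_add_distrib]
        abel
    _ = ∑ j ∈ range (n + 1), (g j + h j) := by
        rw [← sum_range_succ', sum_range_succ, hlast, add_zero, sum_add_distrib]

section CommRing

variable {R : Type*} [CommRing R] (X Y Z : R)

theorem qPoch_succ (A : R) (k : ℕ) : qPoch A X (k + 1) = qPoch A X k * (1 - A * X ^ k) :=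
  Finset.prod_range_succ _ _

theorem qFact_succ (n : ℕ) : qFact X (n + 1) = qFact X n * (1 - X ^ (n + 1)) :=
  Finset.prod_range_succ _ _

def qChoose : ℕ → ℕ → R
  | _, 0 => 1
  | 0, _ + 1 => 0
  | n + 1, k + 1 => X ^ (n - k) * qChoose n k + qChoose n (k + 1)

@[simp]
theorem qChoose_zero_right (n : ℕ) : qChoose X n 0 = 1 := by
  cases n <;> rfl

theorem qChoose_succ_succ (n k : ℕ) :
    qChoose X (n + 1) (k + 1) = X ^ (n - k) * qChoose X n k + qChoose X n (k + 1) :=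
  rfl

theorem qChoose_eq_zero_of_lt {n k : ℕ} (h : n < k) : qChoose X n k = 0 := by
  induction n generalizing k with
  | zero => obtain ⟨k, rfl⟩ := Nat.exists_eq_add_one_of_ne_zero (by omega : k ≠ 0); rfl
  | succ n ih =>
    obtain ⟨k, rfl⟩ := Nat.exists_eq_add_one_of_ne_zero (by omega : k ≠ 0)
    rw [qChoose_succ_succ, ih (by omega), ih (by omega), mul_zero, add_zero]

theorem qChoose_mul_qFact_mul_qFact {n k : ℕ} (hk : k ≤ n) :
    qChoose X n k * qFact X k * qFact X (n - k) = qFact X n := by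
  induction n generalizing k with
  | zero =>
    obtain rfl : k = 0 := by omega
    simp [qFact]
  | succ n ih =>
    cases k with
    | zero => simp [qFact]
    | succ k =>
      have hk : k ≤ n := by omega
      have hshift : qChoose X n (k + 1) * qFact X (k + 1) * qFact X (n - k)
          = qFact X n * (1 - X ^ (n - k)) := by
        rcases hk.eq_or_lt with rfl | hlt
        · simp [qChoose_eq_zero_of_lt]
        · rw [show n - k = n - (k + 1) + 1 by omega, qFact_succ X (n - (k + 1)), ← ih hlt]
          ring
      have hpow : X ^ (n - k) * X ^ (k + 1) = X ^ (n + 1) := by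
        rw [← pow_add]; congr 1; omega
      rw [qFact_succ X k] at hshift
      rw [qChoose_succ_succ, Nat.succ_sub_succ, qFact_succ X k, qFact_succ X n]
      linear_combination X ^ (n - k) * (1 - X ^ (k + 1)) * ih hk + hshift - qFact X n * hpow

theorem qChoose_term_mul_eq {n j : ℕ} (hj : j ≤ n) :
    qChoose X n j * Z ^ j * qPoch Z X (n - j) * qPoch Y X j * (1 - Z * Y * X ^ n)
      = qChoose X n j * Z ^ j * qPoch Z X (n + 1 - j) * qPoch Y X j
        + X ^ (n - j) * qChoose X n j * Z ^ (j + 1) * qPoch Z X (n - j) * qPoch Y X (j + 1) := by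
  have hpow : X ^ (n - j) * X ^ j = X ^ n := by
    rw [← pow_add, Nat.sub_add_cancel hj]
  rw [show n + 1 - j = n - j + 1 by omega, qPoch_succ, qPoch_succ]
  linear_combination qChoose X n j * Z ^ (j + 1) * qPoch Z X (n - j) * qPoch Y X j * Y * hpow

theorem sum_qChoose_succ (n : ℕ) :
    ∑ j ∈ Finset.range (n + 2),
        qChoose X (n + 1) j * Z ^ j * qPoch Z X (n + 1 - j) * qPoch Y X j
      = ∑ j ∈ Finset.range (n + 1),
          (qChoose X n j * Z ^ j * qPoch Z X (n + 1 - j) * qPoch Y X j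
            + X ^ (n - j) * qChoose X n j * Z ^ (j + 1) * qPoch Z X (n - j) * qPoch Y X (j + 1)) := by
  apply Finset.sum_range_succ_eq_sum_add_of_shift
  · simp
  · intro j
    rw [qChoose_succ_succ, Nat.succ_sub_succ]
    ring
  · simp [qChoose_eq_zero_of_lt]

theorem qPoch_mul_eq_sum_qChoose (n : ℕ) :
    qPoch (Z * Y) X n
      = ∑ j ∈ Finset.range (n + 1), qChoose X n j * Z ^ j * qPoch Z X (n - j) * qPoch Y X j := by
  induction n with
  | zero => simp [qPoch]
  | succ n ih =>
    rw [qPoch_succ, ih, Finset.sum_mul, sum_qChoose_succ]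
    refine Finset.sum_congr rfl fun j hj => ?_
    exact qChoose_term_mul_eq X Y Z (Finset.mem_range_succ_iff.mp hj)

end CommRing

theorem qFact_ne_zero {R : Type*} [CommRing R] [NoZeroDivisors R] [Nontrivial R] {X : R}
    (hX : ¬IsOfFinOrder X) (n : ℕ) : qFact X n ≠ 0 :=
  Finset.prod_ne_zero_iff.mpr fun k _ =>
    sub_ne_zero.mpr fun h => hX (isOfFinOrder_iff_pow_eq_one.mpr ⟨k + 1, k.succ_pos, h.symm⟩)

theorem qBinom_eq_qChoose {K : Type*} [Field K] {X : K} (hX : ¬IsOfFinOrder X) {n k : ℕ}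
    (hk : k ≤ n) : qBinom X n k = qChoose X n k := by
  rw [qBinom, div_eq_iff (mul_ne_zero (qFact_ne_zero hX _) (qFact_ne_zero hX _)),
    ← qChoose_mul_qFact_mul_qFact X hk]
  ring

theorem not_isOfFinOrder_XX : ¬IsOfFinOrder XX := by
  rw [isOfFinOrder_iff_pow_eq_one]
  rintro ⟨k, hk, hpow⟩
  have hpoly : (MvPolynomial.X 0 : MvPolynomial (Fin 3) ℤ) ^ k = 1 :=
    IsFractionRing.injective (MvPolynomial (Fin 3) ℤ) F3 (by simpa [XX] using hpow)
  simpa [hk.ne'] using congrArg (MvPolynomial.eval 0) hpoly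

theorem q_binomial_theorem_general (n : ℕ) :
    qPoch (ZZ * YY) XX n
      = ∑ j ∈ Finset.range (n + 1),
          qBinom XX n j * ZZ ^ j * qPoch ZZ XX (n - j) * qPoch YY XX j := by
  rw [qPoch_mul_eq_sum_qChoose]
  refine Finset.sum_congr rfl fun j hj => ?_
  rw [qBinom_eq_qChoose not_isOfFinOrder_XX (Finset.mem_range_succ_iff.mp hj)]

theorem q_binomial_theorem (n : ℕ) (hn : 1 ≤ n) :
    qPoch (ZZ * YY) XX n
      = ∑ j ∈ Finset.range (n + 1),
          qBinom XX n j * ZZ ^ j * qPoch ZZ XX (n - j) * qPoch YY XX j :=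
  q_binomial_theorem_general n

end
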